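/- arXiv:2105.02871 — 2 statements merged into one kernel-verified Lean document; each statement's English description precedes it below -/
import Mathlib

section
/- On Sym(3), the vector assigning to each permutation σ the value sgn(σ) is an eigenvector of the Cayley distance kernel matrix [e^{−β·d_C(σ₁,σ₂)}] with eigenvalue e^{−3β}(e^β)(e^β − 1)(e^β − 2). -/
/-!
The kernel depends only on `σ₁⁻¹ * σ₂`, so it commutes with left translations and every
multiplicative character `χ` is an eigenvector, with eigenvalue `∑ τ, f τ * χ τ`. For the sign
character on `Sym(3)` this sum runs over one identity, three transpositions and two 3-cycles,
giving `(1 - e^{-β}) (1 - 2 e^{-β})`.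
-/

open Equiv

/-- Number of cycles (orbits, including fixed points) of a permutation. -/
def numCycles {N : ℕ} (σ : Perm (Fin N)) : ℕ :=
  (Finset.univ.filter fun x => σ x = x).card + σ.cycleType.card

/-- Cayley distance on `Sym(N)`: `d_C(σ₁,σ₂) = N − #cycles(σ₁⁻¹∘σ₂)`. -/
def cayleyDist {N : ℕ} (σ₁ σ₂ : Perm (Fin N)) : ℕ :=
  N - numCycles (σ₁⁻¹ * σ₂)

/-- The Cayley distance kernel at inverse temperature `β` on `Sym(N)`. -/
noncomputable def cayleyKernel (N : ℕ) (β : ℝ) :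
    Matrix (Perm (Fin N)) (Perm (Fin N)) ℝ :=
  Matrix.of fun σ₁ σ₂ => Real.exp (-β * (cayleyDist σ₁ σ₂ : ℝ))

theorem Matrix.mulVec_leftInvariant_monoidHom {G R : Type*} [Group G] [Fintype G]
    [CommSemiring R] (f : G → R) (χ : G →* R) :
    (Matrix.of fun g h => f (g⁻¹ * h)).mulVec χ = (∑ τ, f τ * χ τ) • ⇑χ := by
  funext σ
  simp only [Matrix.mulVec, dotProduct, Matrix.of_apply, Pi.smul_apply, smul_eq_mul]
  rw [← Equiv.sum_comp (Equiv.mulLeft σ), Finset.sum_mul]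
  refine Finset.sum_congr rfl fun τ _ => ?_
  simp only [coe_mulLeft, inv_mul_cancel_left, map_mul]
  ring

theorem Equiv.Perm.sum_numCycles_sign_fin_three {M : Type*} [AddCommMonoid M]
    (g : ℕ → ℤˣ → M) :
    ∑ τ : Perm (Fin 3), g (numCycles τ) (Perm.sign τ) = g 3 1 + 3 • g 2 (-1) + 2 • g 1 1 := by
  have distribution :
      (Finset.univ : Finset (Perm (Fin 3))).val.map (fun τ => (numCycles τ, Perm.sign τ))
        = {(3, 1), (2, -1), (2, -1), (2, -1), (1, 1), (1, 1)} := by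
    decide
  rw [Finset.sum_eq_multiset_sum,
    show (fun τ => g (numCycles τ) (Perm.sign τ))
      = Function.uncurry g ∘ fun τ => (numCycles τ, Perm.sign τ) from rfl,
    ← Multiset.map_map, distribution]
  simp only [Multiset.insert_eq_cons, Multiset.map_cons, Function.uncurry_apply_pair,
    Multiset.map_singleton, Multiset.sum_cons, Multiset.sum_singleton]
  abel

theorem cayleyKernel_mulVec_sign (N : ℕ) (β : ℝ) :
    (cayleyKernel N β).mulVec (fun σ => ((Perm.sign σ : ℤ) : ℝ))
      = (∑ τ : Perm (Fin N),
          Real.exp (-β * ((N - numCycles τ : ℕ) : ℝ)) * ((Perm.sign τ : ℤ) : ℝ)) •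
        fun σ => ((Perm.sign σ : ℤ) : ℝ) :=
  Matrix.mulVec_leftInvariant_monoidHom (fun τ => Real.exp (-β * ((N - numCycles τ : ℕ) : ℝ)))
    ((Int.castRingHom ℝ : ℤ →* ℝ).comp ((Units.coeHom ℤ).comp Perm.sign))

theorem sum_exp_cayleyDist_mul_sign_fin_three (β : ℝ) :
    ∑ τ : Perm (Fin 3), Real.exp (-β * ((3 - numCycles τ : ℕ) : ℝ)) * ((Perm.sign τ : ℤ) : ℝ)
      = (1 - Real.exp (-β)) * (1 - 2 * Real.exp (-β)) := by
  simp only [mul_comm (-β), Real.exp_nat_mul]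
  rw [Perm.sum_numCycles_sign_fin_three fun n s => Real.exp (-β) ^ (3 - n) * ((s : ℤ) : ℝ)]
  norm_num
  ring

/-- On `Sym(3)`, the signature vector is an eigenvector of the Cayley distance
kernel with eigenvalue `exp(-3β)·exp(β)·(exp(β)−1)·(exp(β)−2)`. -/
theorem sgn_eigenvector_cayleyKernel_sym3 (β : ℝ) :
    (cayleyKernel 3 β).mulVec (fun σ => ((Perm.sign σ : ℤ) : ℝ))
      = (Real.exp (-3 * β) * Real.exp β * (Real.exp β - 1) * (Real.exp β - 2)) •
        (fun σ => ((Perm.sign σ : ℤ) : ℝ)) := by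
  rw [cayleyKernel_mulVec_sign, sum_exp_cayleyDist_mul_sign_fin_three]
  congr 1
  set x := Real.exp (-β)
  set y := Real.exp β
  have hxy : x * y = 1 := by rw [← Real.exp_add, neg_add_cancel, Real.exp_zero]
  have hx3 : Real.exp (-3 * β) = x ^ 3 := by rw [← Real.exp_nat_mul]; ring_nf
  rw [hx3]
  linear_combination (3 * x * (1 + x * y) - (1 + x * y + (x * y) ^ 2) - 2 * x ^ 2) * hxy
end

section
/- For any N ≥ 1 and β ∈ ℝ, the vector (sgn(σ))_{σ ∈ Sym(N)} is an eigenvector of the Cayley distance kernel matrix K(σ₁,σ₂) = e^{−β·d_C(σ₁,σ₂)}, with eigenvalue e^{−βN} ∏_{k=0}^{N−1}(e^β − k). -/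
/-!
The Cayley distance is left invariant, `d_C(σ, σπ) = N - c(π)` with `c(π)` the number of cycles
of `π`, so `K` is a convolution operator on `Sym(N)` and the character `sgn` is an eigenvector
with eigenvalue `e^{-βN} ∑_π sgn(π) x^{c(π)}`, `x = e^β`. This signed cycle polynomial is
`x (x - 1) ⋯ (x - N + 1)`: write `π ∈ Sym(N+1)` as `swap 0 p` times a permutation fixing `0`;
for `p = 0` the point `0` is a new fixed point (factor `x`), while each of the `N` choices
`p ≠ 0` inserts `0` into the cycle through `p`, which keeps the number of cycles and flips the
sign.
-/

open Equiv

namespace Equiv.Perm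

section

variable {α : Type*} [DecidableEq α] {σ c : Perm α} {x y : α}

theorem sameCycle_swap_mul_pow_apply (hx : c x = x) (n : ℕ) :
    SameCycle (swap x y * c) y ((c ^ n) y) := by
  induction n with
  | zero => exact SameCycle.refl _ _
  | succ n ih =>
    by_cases hn : (c ^ (n + 1)) y = y
    · rw [hn]
    have hnx : (c ^ (n + 1)) y ≠ x := fun h =>
      hn (h.trans ((c ^ (n + 1)).injective
        (h.trans (pow_apply_eq_self_of_apply_eq_self hx _).symm)).symm)
    have hstep : (swap x y * c) ((c ^ n) y) = (c ^ (n + 1)) y := by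
      rw [Perm.mul_apply, ← Perm.mul_apply c, ← pow_succ', swap_apply_of_ne_of_ne hnx hn]
    rwa [← hstep, sameCycle_apply_right]

variable [Fintype α]

theorem support_swap_mul_of_apply_eq_self (hx : σ x = x) (hy : σ y ≠ y) :
    (swap x y * σ).support = insert x σ.support := by
  have hxy : x ≠ y := by rintro rfl; exact hy hx
  ext z
  simp only [mem_support, Finset.mem_insert, Perm.mul_apply]
  by_cases hzx : z = x
  · simp [hzx, hx, Ne.symm hxy]
  have hσz : σ z ≠ x := fun h => hzx (σ.injective (h.trans hx.symm))
  by_cases hσzy : σ z = y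
  · simp only [hσzy, swap_apply_right, hzx, false_or]
    exact iff_of_true (Ne.symm hzx) (by rintro rfl; exact hy hσzy)
  · simp [swap_apply_of_ne_of_ne hσz hσzy, hzx]

theorem IsCycle.swap_mul_of_apply_eq_self (hc : c.IsCycle) (hx : c x = x) (hy : c y ≠ y) :
    (swap x y * c).IsCycle := by
  have hxy : x ≠ y := by rintro rfl; exact hy hx
  refine ⟨x, by simp [hx, Ne.symm hxy], fun z hz => ?_⟩
  have hx_y : SameCycle (swap x y * c) x y := ⟨1, by simp [hx]⟩
  rw [← mem_support, support_swap_mul_of_apply_eq_self hx hy, Finset.mem_insert] at hz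
  rcases hz with rfl | hz
  · exact SameCycle.refl _ _
  obtain ⟨n, rfl⟩ := (hc.sameCycle hy (mem_support.mp hz)).exists_nat_pow_eq
  exact hx_y.trans (sameCycle_swap_mul_pow_apply hx n)

theorem cycleType_swap_mul_of_apply_eq_self_of_apply_eq_self (hx : σ x = x) (hy : σ y = y)
    (hxy : x ≠ y) : (swap x y * σ).cycleType = 2 ::ₘ σ.cycleType := by
  have hd : (swap x y).Disjoint σ := fun z => by
    by_cases hzx : z = x
    · exact Or.inr (hzx ▸ hx)
    by_cases hzy : z = y
    · exact Or.inr (hzy ▸ hy)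
    exact Or.inl (swap_apply_of_ne_of_ne hzx hzy)
  rw [hd.cycleType_mul, (isCycle_swap hxy).cycleType, card_support_swap hxy]
  rfl

theorem card_cycleType_swap_mul_of_apply_ne_self (hx : σ x = x) (hy : σ y ≠ y) :
    (swap x y * σ).cycleType.card = σ.cycleType.card := by
  set c := σ.cycleOf y
  have hc : c.IsCycle := isCycle_cycleOf σ hy
  have hcσ : c ∈ σ.cycleFactorsFinset :=
    cycleOf_mem_cycleFactorsFinset_iff.mpr (mem_support.mpr hy)
  have hcx : c x = x := by rw [cycleOf_apply]; split_ifs <;> simp [hx]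
  have hcy : c y ≠ y := by rwa [cycleOf_apply_self]
  set ρ := σ * c⁻¹
  have hρc : ρ.Disjoint c := disjoint_mul_inv_of_mem_cycleFactorsFinset hcσ
  have hρx : ρ x = x := by rw [Perm.mul_apply, inv_eq_iff_eq.mpr hcx.symm, hx]
  have hσ : σ = c * ρ := by rw [← hρc.commute.eq]; simp [ρ]
  have hd : (swap x y * c).Disjoint ρ := by
    rw [disjoint_iff_disjoint_support, support_swap_mul_of_apply_eq_self hcx hcy,
      Finset.disjoint_insert_left, notMem_support]
    exact ⟨hρx, (disjoint_iff_disjoint_support.mp hρc).symm⟩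
  rw [hσ, ← mul_assoc, hd.cycleType_mul, hρc.symm.cycleType_mul,
    (hc.swap_mul_of_apply_eq_self hcx hcy).cycleType, hc.cycleType]
  simp

end

theorem decomposeFin_symm_zero {n : ℕ} (e : Perm (Fin n)) :
    decomposeFin.symm (0, e) = e.extendDomain (finSuccAboveEquiv 0) := by
  have hsucc (i : Fin n) : (finSuccAboveEquiv (0 : Fin (n + 1)) i : Fin (n + 1)) = i.succ :=
    Fin.zero_succAbove i
  ext a
  refine Fin.cases ?_ (fun i => ?_) a
  · rw [decomposeFin_symm_apply_zero, extendDomain_apply_not_subtype]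
    simp
  · rw [decomposeFin_symm_apply_succ, swap_self, Equiv.refl_apply, ← hsucc, ← hsucc,
      extendDomain_apply_image]

theorem decomposeFin_symm_eq_swap_mul {n : ℕ} (p : Fin (n + 1)) (e : Perm (Fin n)) :
    decomposeFin.symm (p, e) = swap 0 p * decomposeFin.symm (0, e) := by
  ext a
  refine Fin.cases ?_ (fun i => ?_) a <;> simp

end Equiv.Perm

open Equiv.Perm

theorem numCycles_add_card_support {N : ℕ} (σ : Perm (Fin N)) :
    numCycles σ + σ.support.card = N + σ.cycleType.card := by
  have h := Finset.card_filter_add_card_filter_not (s := Finset.univ) (fun z => σ z = z)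
  rw [Finset.card_univ, Fintype.card_fin] at h
  unfold numCycles support
  simp only [ne_eq]
  omega

theorem numCycles_le {N : ℕ} (σ : Perm (Fin N)) : numCycles σ ≤ N := by
  have h := numCycles_add_card_support σ
  have : σ.cycleType.card ≤ σ.support.card := by
    rw [← sum_cycleType]
    simpa using Multiset.card_nsmul_le_sum fun a ha =>
      one_le_two.trans (two_le_of_mem_cycleType ha)
  omega

theorem numCycles_swap_mul {N : ℕ} {σ : Perm (Fin N)} {x y : Fin N} (hx : σ x = x)
    (hxy : x ≠ y) : numCycles (swap x y * σ) + 1 = numCycles σ := by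
  have h := numCycles_add_card_support σ
  have h' := numCycles_add_card_support (swap x y * σ)
  by_cases hy : σ y = y
  · rw [← sum_cycleType, cycleType_swap_mul_of_apply_eq_self_of_apply_eq_self hx hy hxy,
      Multiset.sum_cons, Multiset.card_cons, sum_cycleType] at h'
    omega
  · rw [card_cycleType_swap_mul_of_apply_ne_self hx hy, support_swap_mul_of_apply_eq_self hx hy,
      Finset.card_insert_of_notMem (notMem_support.mpr hx)] at h'
    omega

theorem numCycles_decomposeFin_symm {n : ℕ} (p : Fin (n + 1)) (e : Perm (Fin n)) :
    numCycles (decomposeFin.symm (p, e)) = numCycles e + if p = 0 then 1 else 0 := by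
  have h₀ : numCycles (decomposeFin.symm (0, e)) = numCycles e + 1 := by
    have h := numCycles_add_card_support (e.extendDomain (finSuccAboveEquiv 0))
    rw [cycleType_extendDomain, card_support_extend_domain] at h
    have := numCycles_add_card_support e
    rw [decomposeFin_symm_zero]
    omega
  split_ifs with hp
  · rw [hp, h₀]
  · have := numCycles_swap_mul (decomposeFin_symm_apply_zero 0 e) (Ne.symm hp)
    rw [← decomposeFin_symm_eq_swap_mul] at this
    omega

theorem sum_sign_mul_pow_numCycles {R : Type*} [CommRing R] (x : R) (N : ℕ) :
    ∑ σ : Perm (Fin N), ((sign σ : ℤ) : R) * x ^ numCycles σ =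
      ∏ k ∈ Finset.range N, (x - k) := by
  induction N with
  | zero => simp [numCycles]
  | succ n ih =>
    rw [Finset.prod_range_succ, ← ih, ← decomposeFin.symm.sum_comp, Fintype.sum_prod_type,
      Fin.sum_univ_succ]
    simp only [decomposeFin.symm_sign, numCycles_decomposeFin_symm, Fin.succ_ne_zero, ↓reduceIte,
      one_mul, add_zero, pow_succ, Units.val_neg, Int.cast_neg, neg_mul, Finset.sum_neg_distrib,
      Finset.sum_const, Finset.card_univ, Fintype.card_fin, nsmul_eq_mul, ← mul_assoc,
      ← Finset.sum_mul]
    ring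

theorem cayleyKernel_apply {N : ℕ} (β : ℝ) (σ τ : Perm (Fin N)) :
    cayleyKernel N β σ τ = Real.exp (-β * N) * Real.exp β ^ numCycles (σ⁻¹ * τ) := by
  rw [cayleyKernel, Matrix.of_apply, cayleyDist, Nat.cast_sub (numCycles_le _),
    ← Real.exp_nat_mul, ← Real.exp_add]
  ring_nf

theorem sgn_eigenvector_cayleyKernel_general (N : ℕ) (β : ℝ) :
    (cayleyKernel N β).mulVec (fun σ => ((Perm.sign σ : ℤ) : ℝ))
      = (Real.exp (-β * N) * ∏ k ∈ Finset.range N, (Real.exp β - (k : ℝ))) •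
        (fun σ => ((Perm.sign σ : ℤ) : ℝ)) := by
  funext σ
  calc ∑ τ, cayleyKernel N β σ τ * ((sign τ : ℤ) : ℝ)
      = ∑ π, cayleyKernel N β σ (σ * π) * ((sign (σ * π) : ℤ) : ℝ) :=
        (Equiv.sum_comp (Equiv.mulLeft σ) _).symm
    _ = Real.exp (-β * N) * ((sign σ : ℤ) : ℝ) *
          ∑ π : Perm (Fin N), ((sign π : ℤ) : ℝ) * Real.exp β ^ numCycles π := by
        simp only [cayleyKernel_apply, inv_mul_cancel_left, map_mul, Units.val_mul, Int.cast_mul,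
          Finset.mul_sum]
        exact Finset.sum_congr rfl fun π _ => by ring
    _ = _ := by
        rw [sum_sign_mul_pow_numCycles, Pi.smul_apply, smul_eq_mul]
        ring

/-- For any , the signature vector is an eigenvector of the Cayley distance
kernel with eigenvalue `e^{−βN} ∏_{k=0}^{N−1}(e^β − k)`. -/
theorem sgn_eigenvector_cayleyKernel (N : ℕ) (hN : 1 ≤ N) (β : ℝ) :
    (cayleyKernel N β).mulVec (fun σ => ((Perm.sign σ : ℤ) : ℝ))
      = (Real.exp (-β * N) * ∏ k ∈ Finset.range N, (Real.exp β - (k : ℝ))) •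
        (fun σ => ((Perm.sign σ : ℤ) : ℝ)) :=
  sgn_eigenvector_cayleyKernel_general N β
end
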